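/- If a matrix Φ ∈ ℝ^{M×N} satisfies the RIP of order k with constant δ ∈ (0,1), then its operator norm satisfies ‖Φ‖_op ≤ √(N/k + 1)·√(1+δ). -/

import Mathlib

open scoped BigOperators Matrix

/-- The Euclidean (ℓ²) norm of a real vector. -/
noncomputable def l2norm {ι : Type*} [Fintype ι] (v : ι → ℝ) : ℝ :=
  Real.sqrt (∑ i, (v i) ^ 2)

/-- The ℓ¹ norm of a real vector. -/
noncomputable def l1norm {ι : Type*} [Fintype ι] (v : ι → ℝ) : ℝ :=
  ∑ i, |v i|

/-- `v` has at most `k` nonzero entries. -/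
def IsSparse {ι : Type*} {α : Type*} [Zero α] (k : ℕ) (v : ι → α) : Prop :=
  ∃ T : Finset ι, T.card ≤ k ∧ ∀ i ∉ T, v i = 0

/-- The restricted isometry property of order `k` with constant `δ`. -/
def HasRIP {M N : ℕ} (Φ : Matrix (Fin M) (Fin N) ℝ) (k : ℕ) (δ : ℝ) : Prop :=
  ∀ v : Fin N → ℝ, IsSparse k v →
    (1 - δ) * l2norm v ^ 2 ≤ l2norm (Φ.mulVec v) ^ 2 ∧
      l2norm (Φ.mulVec v) ^ 2 ≤ (1 + δ) * l2norm v ^ 2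

/-- `Φ` has the same null space as some matrix with RIP of order `k`, constant `δ`. -/
def HasRIPNSP {M N : ℕ} (Φ : Matrix (Fin M) (Fin N) ℝ) (k : ℕ) (δ : ℝ) : Prop :=
  ∃ A : Matrix (Fin M) (Fin N) ℝ,
    {v : Fin N → ℝ | A.mulVec v = 0} = {v : Fin N → ℝ | Φ.mulVec v = 0} ∧ HasRIP A k δ

/-- The null space property of order `s` with constant `γ`. -/
def HasNSP {M N : ℕ} (Φ : Matrix (Fin M) (Fin N) ℝ) (s : ℕ) (γ : ℝ) : Prop :=
  ∀ v : Fin N → ℝ, Φ.mulVec v = 0 → ∀ T : Finset (Fin N), T.card ≤ s →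
    ∑ i ∈ T, |v i| ≤ γ * ∑ i ∈ Tᶜ, |v i|

/-- `σ_s(x)`: the ℓ¹ distance from `x` to the set of `s`-sparse vectors. -/
noncomputable def sigmaApprox {N : ℕ} (s : ℕ) (x : Fin N → ℝ) : ℝ :=
  sInf { t : ℝ | ∃ y : Fin N → ℝ, IsSparse s y ∧ t = l1norm (x - y) }

/-- The smallest positive singular value of `Φ`: the infimum of `‖Φx‖₂` over unit
vectors `x` orthogonal to the kernel of `Φ`. -/
noncomputable def smallestPosSV {M N : ℕ} (Φ : Matrix (Fin M) (Fin N) ℝ) : ℝ :=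
  sInf { t : ℝ | ∃ x : Fin N → ℝ, l2norm x = 1 ∧
    (∀ y : Fin N → ℝ, Φ.mulVec y = 0 → x ⬝ᵥ y = 0) ∧ t = l2norm (Φ.mulVec x) }

/-- The operator norm of `Φ` (sup of `‖Φx‖₂` over unit vectors). -/
noncomputable def opNorm {M N : ℕ} (Φ : Matrix (Fin M) (Fin N) ℝ) : ℝ :=
  sSup { t : ℝ | ∃ x : Fin N → ℝ, l2norm x = 1 ∧ t = l2norm (Φ.mulVec x) }

/-!
Cut a unit vector `x ∈ ℝᴺ` into the `⌊N/k⌋ + 1` consecutive blocks of `k` coordinates. Each block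
is `k`-sparse, so RIP bounds `‖Φ xⱼ‖₂ ≤ √(1+δ) ‖xⱼ‖₂`; the triangle inequality and Cauchy–Schwarz
then give `‖Φ x‖₂ ≤ √(1+δ) ∑ⱼ ‖xⱼ‖₂ ≤ √(1+δ) √(⌊N/k⌋ + 1) (∑ⱼ ‖xⱼ‖₂²)^{1/2} = √(1+δ) √(⌊N/k⌋ + 1)`.
-/

section Blocks

variable {ι κ : Type*}

lemma l2norm_nonneg [Fintype ι] (v : ι → ℝ) : 0 ≤ l2norm v :=
  Real.sqrt_nonneg _

lemma l2norm_eq_norm_toLp [Fintype ι] (v : ι → ℝ) : l2norm v = ‖WithLp.toLp 2 v‖ := by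
  simp only [l2norm, EuclideanSpace.norm_eq, Real.norm_eq_abs, sq_abs]

lemma l2norm_sum_le [Fintype ι] [Fintype κ] (g : κ → ι → ℝ) :
    l2norm (∑ j, g j) ≤ ∑ j, l2norm (g j) := by
  simp only [l2norm_eq_norm_toLp, WithLp.toLp_sum]
  exact norm_sum_le _ _

lemma sum_le_sqrt_card_mul_sqrt_sum_sq [Fintype κ] (f : κ → ℝ) :
    ∑ j, f j ≤ √(Fintype.card κ) * √(∑ j, f j ^ 2) := by
  rw [← Real.sqrt_mul (Nat.cast_nonneg _)]
  exact Real.le_sqrt_of_sq_le (by simpa using sq_sum_le_card_mul_sum_sq (s := Finset.univ) (f := f))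

variable [DecidableEq κ]

def blockPart (b : ι → κ) (x : ι → ℝ) (j : κ) : ι → ℝ :=
  fun i => if b i = j then x i else 0

variable (b : ι → κ) (x : ι → ℝ)

lemma sum_blockPart [Fintype κ] : ∑ j, blockPart b x j = x := by
  ext i
  simp [blockPart, Finset.sum_apply]

lemma sum_l2norm_blockPart_sq [Fintype ι] [Fintype κ] :
    ∑ j, l2norm (blockPart b x j) ^ 2 = ∑ i, x i ^ 2 := by
  simp only [l2norm, Real.sq_sqrt (Finset.sum_nonneg fun _ _ => sq_nonneg _)]
  rw [Finset.sum_comm]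
  simp [blockPart]

lemma isSparse_blockPart [Fintype ι] {k : ℕ} {j : κ}
    (hj : (Finset.univ.filter fun i => b i = j).card ≤ k) : IsSparse k (blockPart b x j) :=
  ⟨_, hj, fun i hi => by simp_all [blockPart]⟩

lemma l2norm_mulVec_le_of_sparse [Fintype ι] [Fintype κ] {m : Type*} [Fintype m] {k : ℕ} {C : ℝ}
    (hC : 0 ≤ C) (Φ : Matrix m ι ℝ) (hΦ : ∀ v, IsSparse k v → l2norm (Φ *ᵥ v) ≤ C * l2norm v)
    (hb : ∀ j, (Finset.univ.filter fun i => b i = j).card ≤ k) :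
    l2norm (Φ *ᵥ x) ≤ C * √(Fintype.card κ) * l2norm x := by
  calc l2norm (Φ *ᵥ x) = l2norm (∑ j, Φ *ᵥ blockPart b x j) := by
        rw [← Matrix.mulVec_sum, sum_blockPart]
    _ ≤ ∑ j, C * l2norm (blockPart b x j) :=
        (l2norm_sum_le _).trans
          (Finset.sum_le_sum fun j _ => hΦ _ (isSparse_blockPart b x (hb j)))
    _ = C * ∑ j, l2norm (blockPart b x j) := (Finset.mul_sum _ _ _).symm
    _ ≤ C * (√(Fintype.card κ) * l2norm x) := by
        gcongr
        rw [l2norm, ← sum_l2norm_blockPart_sq b x]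
        exact sum_le_sqrt_card_mul_sqrt_sum_sq _
    _ = C * √(Fintype.card κ) * l2norm x := (mul_assoc _ _ _).symm

end Blocks

lemma card_filter_div_eq_le {N k : ℕ} (hk : 0 < k) (j : ℕ) :
    (Finset.univ.filter fun i : Fin N => (i : ℕ) / k = j).card ≤ k := by
  calc (Finset.univ.filter fun i : Fin N => (i : ℕ) / k = j).card
      ≤ (Finset.range k).card := by
        refine Finset.card_le_card_of_injOn (fun i => (i : ℕ) % k)
          (fun i _ => Finset.mem_range.2 (Nat.mod_lt _ hk)) ?_
        intro a ha b hb hab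
        simp only [Finset.coe_filter, Finset.mem_univ, true_and, Set.mem_ofPred_eq] at ha hb
        apply Fin.ext
        rw [← Nat.div_add_mod a k, ← Nat.div_add_mod b k, ha, hb]
        exact congrArg _ hab
    _ = k := Finset.card_range k

lemma HasRIP.l2norm_mulVec_le {M N k : ℕ} {δ : ℝ} {Φ : Matrix (Fin M) (Fin N) ℝ}
    (hΦ : HasRIP Φ k δ) {v : Fin N → ℝ} (hv : IsSparse k v) :
    l2norm (Φ *ᵥ v) ≤ √(1 + δ) * l2norm v := by
  rw [← Real.sqrt_sq (l2norm_nonneg (Φ *ᵥ v)), ← Real.sqrt_sq (l2norm_nonneg v),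
    ← Real.sqrt_mul' _ (sq_nonneg _)]
  exact Real.sqrt_le_sqrt (hΦ v hv).2

lemma opNorm_le_of_forall_unit {M N : ℕ} {Φ : Matrix (Fin M) (Fin N) ℝ} {C : ℝ} (hC : 0 ≤ C)
    (h : ∀ x, l2norm x = 1 → l2norm (Φ *ᵥ x) ≤ C) : opNorm Φ ≤ C :=
  Real.sSup_le (by rintro t ⟨x, hx, rfl⟩; exact h x hx) hC

theorem stmt5_general {M N k : ℕ} (hk : 0 < k)
    {δ : ℝ}
    {Φ : Matrix (Fin M) (Fin N) ℝ} (hΦ : HasRIP Φ k δ) :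
    opNorm Φ ≤ Real.sqrt ((N : ℝ) / (k : ℝ) + 1) * Real.sqrt (1 + δ) := by
  let block : Fin N → Fin (N / k + 1) :=
    fun i => ⟨i / k, Nat.lt_succ_of_le (Nat.div_le_div_right i.2.le)⟩
  have hblock : ∀ j, (Finset.univ.filter fun i => block i = j).card ≤ k := fun j => by
    simpa only [block, Fin.ext_iff] using card_filter_div_eq_le (N := N) hk j
  have hcard : √(Fintype.card (Fin (N / k + 1))) ≤ √((N : ℝ) / k + 1) := by
    rw [Fintype.card_fin]
    push_cast
    gcongr
    exact Nat.cast_div_le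
  refine opNorm_le_of_forall_unit (by positivity) fun x hx => ?_
  calc l2norm (Φ *ᵥ x) ≤ √(1 + δ) * √(Fintype.card (Fin (N / k + 1))) * l2norm x :=
        l2norm_mulVec_le_of_sparse block x (Real.sqrt_nonneg _) Φ
          (fun _ hv => hΦ.l2norm_mulVec_le hv) hblock
    _ ≤ √((N : ℝ) / k + 1) * √(1 + δ) := by
        rw [hx, mul_one, mul_comm]
        exact mul_le_mul_of_nonneg_right hcard (Real.sqrt_nonneg _)

/-- **Lemma 3.1 (operator norm bound from RIP).**
If `Φ` has RIP of order `k` with constant `δ`, then `‖Φ‖_op ≤ √(N/k + 1) · √(1+δ)`. -/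
theorem stmt5 {M N k : ℕ} (hk : 0 < k)
    {δ : ℝ} (hδ0 : 0 < δ) (hδ1 : δ < 1)
    {Φ : Matrix (Fin M) (Fin N) ℝ} (hΦ : HasRIP Φ k δ) :
    opNorm Φ ≤ Real.sqrt ((N : ℝ) / (k : ℝ) + 1) * Real.sqrt (1 + δ) :=
  stmt5_general hk hΦ
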